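/- A topological space X is a continuous open image of a π-space if and only if the cardinality of X is at most the continuum 2^{ℵ₀} and there exists a complete π-base Souslin scheme on X that covers X. -/
import Mathlib


open Set Topology

namespace PiSpacePaper

/-- The restriction `p↾n` of `p : ℕ → ℕ`, as a list of length `n`. -/
def restrictSeq (p : ℕ → ℕ) (n : ℕ) : List ℕ := (List.range n).map p

/-- The basic clopen set `S_a` of the Baire space. -/
def cyl (a : List ℕ) : Set (ℕ → ℕ) := {p | restrictSeq p a.length = a}

/-- The fruit `⋂ n, V (p↾n)` of a branch `p` in a Souslin scheme `V`. -/
def fruit {X : Type*} (V : List ℕ → Set X) (p : ℕ → ℕ) : Set X :=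
  ⋂ n : ℕ, V (restrictSeq p n)

/-- A Souslin scheme `V` covers the set `s`. -/
def Covers {X : Type*} (V : List ℕ → Set X) (s : Set X) : Prop :=
  V [] = s ∧ ∀ a : List ℕ, V a = ⋃ n : ℕ, V (a ++ [n])

/-- A Souslin scheme `V` partitions the set `s`. -/
def Partitions {X : Type*} (V : List ℕ → Set X) (s : Set X) : Prop :=
  Covers V s ∧ ∀ (a : List ℕ) (n m : ℕ), n ≠ m → V (a ++ [n]) ∩ V (a ++ [m]) = ∅

/-- A Souslin scheme is complete iff all fruits are nonempty. -/
def Complete {X : Type*} (V : List ℕ → Set X) : Prop :=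
  ∀ p : ℕ → ℕ, (fruit V p).Nonempty

/-- A Souslin scheme has strict branches iff every fruit is a singleton. -/
def StrictBranches {X : Type*} (V : List ℕ → Set X) : Prop :=
  ∀ p : ℕ → ℕ, ∃ x : X, fruit V p = {x}

/-- A Souslin scheme is open iff all its members are open sets. -/
def OpenScheme {X : Type*} [TopologicalSpace X] (V : List ℕ → Set X) : Prop :=
  ∀ a : List ℕ, IsOpen (V a)

/-- `flesh V = ⋃ a, V a`. -/
def flesh {X : Type*} (V : List ℕ → Set X) : Set X := ⋃ a : List ℕ, V a

/-- `branches V x = {q ∈ ℕ^ℕ : x ∈ fruit V q}`. -/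
def branches {X : Type*} (V : List ℕ → Set X) (x : X) : Set (ℕ → ℕ) :=
  {q | x ∈ fruit V q}

/-- A family `γ` of subsets is a π-net for a space: all members are nonempty and every
nonempty open set contains a member. -/
def IsPiNet {X : Type*} [TopologicalSpace X] (γ : Set (Set X)) : Prop :=
  (∀ G ∈ γ, G.Nonempty) ∧
  ∀ U : Set X, IsOpen U → U.Nonempty → ∃ G ∈ γ, G ⊆ U

/-- A family `γ` of subsets is a π-base for a space: all members are nonempty open sets
and every nonempty open set contains a member. -/
def IsPiBase {X : Type*} [TopologicalSpace X] (γ : Set (Set X)) : Prop :=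
  (∀ G ∈ γ, IsOpen G ∧ G.Nonempty) ∧
  ∀ U : Set X, IsOpen U → U.Nonempty → ∃ G ∈ γ, G ⊆ U

/-- A π-space: there is an open Souslin scheme that partitions the space, has strict
branches, and whose family of members is a π-base. -/
def IsPiSpace (X : Type*) [TopologicalSpace X] : Prop :=
  ∃ V : List ℕ → Set X, OpenScheme V ∧ Partitions V Set.univ ∧ StrictBranches V ∧
    IsPiBase {S : Set X | ∃ a : List ℕ, S = V a}

/-- A Lusin π-base for a space. -/
def IsLusinPiBase {X : Type*} [TopologicalSpace X] (V : List ℕ → Set X) : Prop :=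
  OpenScheme V ∧ Partitions V Set.univ ∧ StrictBranches V ∧
  ∀ (x : X) (U : Set X), IsOpen U → x ∈ U →
    ∃ (a : List ℕ) (n : ℕ), x ∈ V a ∧ (⋃ i : ℕ, ⋃ _ : n ≤ i, V (a ++ [i])) ⊆ U

/-- A map is quasi-open iff the image of every nonempty open set has nonempty interior. -/
def IsQuasiOpen {X Y : Type*} [TopologicalSpace X] [TopologicalSpace Y] (f : X → Y) : Prop :=
  ∀ U : Set X, IsOpen U → U.Nonempty → (interior (f '' U)).Nonempty

/-- A π-net Souslin scheme on a space `X`: for every finite sequence `a`, the family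
`{V b : b ⊒ a}` is a π-net for the subspace `V a` of `X` (whose nonempty open sets are
exactly the nonempty sets `U ∩ V a` with `U` open in `X`). -/
def IsPiNetScheme {X : Type*} [TopologicalSpace X] (V : List ℕ → Set X) : Prop :=
  ∀ a : List ℕ,
    (∀ b : List ℕ, a <+: b → (V b).Nonempty) ∧
    ∀ U : Set X, IsOpen U → (U ∩ V a).Nonempty → ∃ b : List ℕ, a <+: b ∧ V b ⊆ U ∩ V a

/-- A π-base Souslin scheme on a space is an open π-net Souslin scheme. -/
def IsPiBaseScheme {X : Type*} [TopologicalSpace X] (V : List ℕ → Set X) : Prop :=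
  OpenScheme V ∧ IsPiNetScheme V

/-- A selector on a Souslin scheme `V`: a surjection of the Baire space onto `flesh V`
such that every fiber `f⁻¹(x)` is a dense subset of the subspace `branches V x` of the
Baire space. -/
def IsSelector {X : Type*} (V : List ℕ → Set X) (f : (ℕ → ℕ) → X) : Prop :=
  Set.range f = flesh V ∧
  ∀ x ∈ flesh V, f ⁻¹' {x} ⊆ branches V x ∧ branches V x ⊆ closure (f ⁻¹' {x})

/-- The topology `σ_{τ,f}` on the Baire space, generated by the subbase consisting of the
`τ`-preimages under `f` together with the basic sets `S_a`. -/
def sigmaTop {X : Type*} [TopologicalSpace X] (f : (ℕ → ℕ) → X) :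
    TopologicalSpace (ℕ → ℕ) :=
  TopologicalSpace.generateFrom
    ({S : Set (ℕ → ℕ) | ∃ U : Set X, IsOpen U ∧ S = f ⁻¹' U} ∪
      {S : Set (ℕ → ℕ) | ∃ a : List ℕ, S = cyl a})

/-- The Souslin scheme `V^g`, where `V^g_a = V_{g ∘ a}`. -/
def schemeComp {X : Type*} (V : List ℕ → Set X) (g : ℕ → ℕ) : List ℕ → Set X :=
  fun a => V (a.map g)

/-- A subset of the Baire space is dense-in-itself iff it has no isolated points. -/
def DenseInItself (B : Set (ℕ → ℕ)) : Prop :=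
  ∀ q ∈ B, q ∈ closure (B \ {q})

/-- `X` is a continuous open image of a π-space. -/
def IsContinuousOpenImageOfPiSpace (X : Type) [TopologicalSpace X] : Prop :=
  ∃ (Y : Type) (_ : TopologicalSpace Y) (f : Y → X),
    IsPiSpace Y ∧ Continuous f ∧ IsOpenMap f ∧ Function.Surjective f

/-- The topology `τ_N` on the Baire space generated by the sets `U \ A` with `U` open in
the Baire space and `A` nowhere dense in the Baire space. -/
def tauN : TopologicalSpace (ℕ → ℕ) :=
  TopologicalSpace.generateFrom
    {S : Set (ℕ → ℕ) | ∃ U A : Set (ℕ → ℕ), IsOpen U ∧ IsNowhereDense A ∧ S = U \ A}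

section Helpers

@[simp] lemma restrictSeq_length (p : ℕ → ℕ) (n : ℕ) : (restrictSeq p n).length = n := by
  simp [restrictSeq]

lemma restrictSeq_succ (p : ℕ → ℕ) (n : ℕ) :
    restrictSeq p (n + 1) = restrictSeq p n ++ [p n] := by
  simp [restrictSeq, List.range_succ]

@[simp] lemma restrictSeq_getElem (p : ℕ → ℕ) {n i : ℕ} (h : i < n) :
    (restrictSeq p n)[i]'(by simpa using h) = p i := by
  simp [restrictSeq]

lemma restrictSeq_take (p : ℕ → ℕ) {m n : ℕ} (h : m ≤ n) :
    (restrictSeq p n).take m = restrictSeq p m := by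
  apply List.ext_getElem (by simp [h])
  intro i h1 h2
  have hi : i < m := by simpa using h2
  simp [restrictSeq_getElem p (lt_of_lt_of_le hi h), restrictSeq_getElem p hi]

lemma restrictSeq_prefix (p : ℕ → ℕ) {m n : ℕ} (h : m ≤ n) :
    restrictSeq p m <+: restrictSeq p n := by
  rw [← restrictSeq_take p h]; exact List.take_prefix _ _

lemma restrictSeq_comp (g p : ℕ → ℕ) (n : ℕ) :
    restrictSeq (g ∘ p) n = (restrictSeq p n).map g := by
  simp [restrictSeq]

lemma mem_cyl {p : ℕ → ℕ} {a : List ℕ} : p ∈ cyl a ↔ restrictSeq p a.length = a :=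
  Iff.rfl

lemma mem_cyl_restrictSeq (p : ℕ → ℕ) (n : ℕ) : p ∈ cyl (restrictSeq p n) := by
  rw [mem_cyl, restrictSeq_length]

lemma cyl_nonempty (a : List ℕ) : (cyl a).Nonempty := by
  refine ⟨fun i => a.getD i 0, ?_⟩
  rw [mem_cyl]
  apply List.ext_getElem (by simp)
  intro i h1 h2
  have : i < a.length := by simpa using h2
  simp only [restrictSeq_getElem _ this]
  exact List.getD_eq_getElem a 0 this

lemma cyl_mono {a b : List ℕ} (h : a <+: b) : cyl b ⊆ cyl a := by
  intro q hq
  rw [mem_cyl] at hq ⊢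
  have := restrictSeq_take q h.length_le
  rw [← this, hq, ← List.prefix_iff_eq_take.1 h]

lemma mem_cyl_eq {p : ℕ → ℕ} {a : List ℕ} (h : p ∈ cyl a) : a = restrictSeq p a.length :=
  (mem_cyl.1 h).symm

/-- two lists are comparable or diverge at a common node -/
lemma prefix_or_diverge (a b : List ℕ) :
    a <+: b ∨ b <+: a ∨ ∃ (c : List ℕ) (n m : ℕ), n ≠ m ∧ (c ++ [n]) <+: a ∧ (c ++ [m]) <+: b := by
  induction a generalizing b with
  | nil => exact Or.inl (List.nil_prefix)
  | cons x a' ih =>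
    cases b with
    | nil => exact Or.inr (Or.inl List.nil_prefix)
    | cons y b' =>
      by_cases hxy : x = y
      · subst hxy
        rcases ih b' with h | h | ⟨c, n, m, hnm, h1, h2⟩
        · exact Or.inl (List.cons_prefix_cons.2 ⟨rfl, h⟩)
        · exact Or.inr (Or.inl (List.cons_prefix_cons.2 ⟨rfl, h⟩))
        · exact Or.inr (Or.inr ⟨x :: c, n, m, hnm,
            List.cons_prefix_cons.2 ⟨rfl, h1⟩, List.cons_prefix_cons.2 ⟨rfl, h2⟩⟩)
      · refine Or.inr (Or.inr ⟨[], x, y, hxy, ?_, ?_⟩) <;>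
          simp [List.cons_prefix_cons]

section Scheme

variable {X : Type*} {V : List ℕ → Set X}
variable (hU : ∀ a : List ℕ, V a = ⋃ n : ℕ, V (a ++ [n]))
include hU

lemma scheme_child_subset (a : List ℕ) (n : ℕ) : V (a ++ [n]) ⊆ V a := by
  rw [hU a]; exact subset_iUnion (fun n => V (a ++ [n])) n

lemma scheme_append_subset (t a : List ℕ) : V (a ++ t) ⊆ V a := by
  induction t generalizing a with
  | nil => simp
  | cons n t' ih =>
    have : a ++ n :: t' = (a ++ [n]) ++ t' := by simp
    rw [this]
    exact (ih (a ++ [n])).trans (scheme_child_subset hU a n)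

lemma scheme_mono {a b : List ℕ} (h : a <+: b) : V b ⊆ V a := by
  obtain ⟨t, rfl⟩ := h
  exact scheme_append_subset hU t a

/-- navigation: from any point of `V d` one can grow a branch through `d`. -/
lemma scheme_nav {d : List ℕ} {x : X} (hx : x ∈ V d) :
    ∃ q : ℕ → ℕ, restrictSeq q d.length = d ∧ ∀ n, x ∈ V (restrictSeq q n) := by
  classical
  set step : List ℕ → List ℕ :=
    fun b => b ++ [if h : ∃ n, x ∈ V (b ++ [n]) then h.choose else 0] with hstep
  set A : ℕ → List ℕ := fun k => step^[k] d with hA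
  have hAsucc : ∀ k, A (k + 1) = step (A k) := fun k => Function.iterate_succ_apply' step k d
  have hmem : ∀ k, x ∈ V (A k) := by
    intro k
    induction k with
    | zero => exact hx
    | succ k ih =>
      have hex : ∃ n, x ∈ V (A k ++ [n]) := by
        have := hU (A k) ▸ ih
        simpa using this
      rw [hAsucc k, hstep]
      simp only [dif_pos hex]
      exact hex.choose_spec
  have hlen : ∀ k, (A k).length = d.length + k := by
    intro k
    induction k with
    | zero => simp [hA]
    | succ k ih => rw [hAsucc k, hstep]; simp [ih]; ring
  have hpre : ∀ k, A k <+: A (k + 1) := by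
    intro k; rw [hAsucc k, hstep]; exact List.prefix_append _ _
  have hchain : ∀ {k k'}, k ≤ k' → A k <+: A k' := by
    intro k k' h
    induction h with
    | refl => exact List.prefix_refl _
    | step h ih => exact ih.trans (hpre _)
  set q : ℕ → ℕ := fun i => (A (i + 1)).getD i 0 with hq
  have hkey : ∀ n, restrictSeq q n = (A n).take n := by
    intro n
    apply List.ext_getElem (by simp [hlen n])
    intro i h1 h2
    have hin : i < n := by simpa using h1
    rw [restrictSeq_getElem q hin, List.getElem_take]
    have hi1 : i < (A (i + 1)).length := by rw [hlen]; omega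
    rw [hq]
    simp only [List.getD_eq_getElem (A (i+1)) 0 hi1]
    exact (hchain (Nat.succ_le_of_lt hin)).getElem hi1
  have hd : restrictSeq q d.length = d := by
    rw [hkey d.length]
    have : d <+: A d.length := by
      have := hchain (Nat.zero_le d.length)
      simpa [hA] using this
    have h2 := List.prefix_iff_eq_take.1 this
    exact h2.symm
  refine ⟨q, hd, fun n => ?_⟩
  rw [hkey n]
  exact scheme_mono hU (List.take_prefix n (A n)) (hmem n)

end Scheme
end Helpers

section CylScheme

lemma cyl_nil : cyl ([] : List ℕ) = univ := by
  ext p; simp [mem_cyl, restrictSeq]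

lemma cyl_union (a : List ℕ) : cyl a = ⋃ n : ℕ, cyl (a ++ [n]) := by
  ext p
  simp only [mem_iUnion, mem_cyl, List.length_append, List.length_cons, List.length_nil]
  constructor
  · intro h
    refine ⟨p a.length, ?_⟩
    rw [show a.length + (0 + 1) = a.length + 1 by ring, restrictSeq_succ, h]
  · rintro ⟨n, hn⟩
    have h2 : (restrictSeq p (a.length + (0 + 1))).take a.length
        = (a ++ [n]).take a.length := by rw [hn]
    rw [restrictSeq_take p (by omega), List.take_left'] at h2
    · exact h2
    · rfl

lemma cyl_disjoint (a : List ℕ) {n m : ℕ} (h : n ≠ m) :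
    cyl (a ++ [n]) ∩ cyl (a ++ [m]) = ∅ := by
  ext p
  simp only [mem_inter_iff, mem_cyl, mem_empty_iff_false, iff_false, not_and]
  intro h1 h2
  rw [List.length_append] at h1 h2
  simp only [List.length_cons, List.length_nil] at h1 h2
  rw [h1] at h2
  have h3 := List.append_cancel_left h2
  simp only [List.cons.injEq] at h3
  exact h h3.1

lemma fruit_cyl (p : ℕ → ℕ) : fruit cyl p = {p} := by
  ext q
  simp only [fruit, mem_iInter, mem_cyl, restrictSeq_length, mem_singleton_iff]
  constructor
  · intro h
    funext i
    have h1 := h (i + 1)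
    rw [restrictSeq_succ, restrictSeq_succ, h i] at h1
    have h2 := List.append_cancel_left h1
    simpa using h2
  · rintro rfl; intro n; rfl

lemma fruit_comp {X : Type*} (V : List ℕ → Set X) (g : ℕ → ℕ) (p : ℕ → ℕ) :
    fruit (schemeComp V g) p = fruit V (g ∘ p) := by
  simp [fruit, schemeComp, restrictSeq_comp]

lemma fruit_subset {X : Type*} (V : List ℕ → Set X) (p : ℕ → ℕ) (n : ℕ) :
    fruit V p ⊆ V (restrictSeq p n) := iInter_subset _ n

lemma mk_baire : Cardinal.mk (ℕ → ℕ) = Cardinal.continuum := by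
  rw [Cardinal.mk_arrow]; simp [Cardinal.aleph0_power_aleph0]

lemma scheme_comparable {X : Type*} {V : List ℕ → Set X}
    (hU : ∀ a : List ℕ, V a = ⋃ n : ℕ, V (a ++ [n]))
    (hdisj : ∀ (a : List ℕ) (n m : ℕ), n ≠ m → V (a ++ [n]) ∩ V (a ++ [m]) = ∅)
    {a b : List ℕ} (h : (V a ∩ V b).Nonempty) : a <+: b ∨ b <+: a := by
  rcases prefix_or_diverge a b with h1 | h1 | ⟨c, n, m, hnm, h1, h2⟩
  · exact Or.inl h1
  · exact Or.inr h1
  · exfalso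
    obtain ⟨x, hxa, hxb⟩ := h
    have hx1 : x ∈ V (c ++ [n]) := scheme_mono hU h1 hxa
    have hx2 : x ∈ V (c ++ [m]) := scheme_mono hU h2 hxb
    have := hdisj c n m hnm
    exact absurd (this ▸ (mem_inter hx1 hx2)) (notMem_empty x)

end CylScheme

section Coding

/-- the collapsing map used to duplicate branches. -/
def gg : ℕ → ℕ := fun n => (Nat.unpair n).1

@[simp] lemma gg_pair (m k : ℕ) : gg (Nat.pair m k) = m := by
  simp [gg]

open Classical in
/-- a total version of the navigation sequence. -/
noncomputable def navSeq {X : Type*} (V : List ℕ → Set X) (d : List ℕ) (x : X) : ℕ → ℕ :=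
  if h : (∀ a : List ℕ, V a = ⋃ n : ℕ, V (a ++ [n])) ∧ x ∈ V d then
    (scheme_nav h.1 h.2).choose
  else fun _ => 0

lemma navSeq_spec {X : Type*} {V : List ℕ → Set X}
    (hU : ∀ a : List ℕ, V a = ⋃ n : ℕ, V (a ++ [n])) {d : List ℕ} {x : X} (hx : x ∈ V d) :
    restrictSeq (navSeq V d x) d.length = d ∧ ∀ n, x ∈ V (restrictSeq (navSeq V d x) n) := by
  have h : (∀ a : List ℕ, V a = ⋃ n : ℕ, V (a ++ [n])) ∧ x ∈ V d := ⟨hU, hx⟩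
  rw [navSeq, dif_pos h]
  exact (scheme_nav h.1 h.2).choose_spec

/-- the branch encoding the pair `(a, x)`. -/
noncomputable def FF {X : Type*} (V : List ℕ → Set X) (code : X → ℕ → ℕ)
    (z : List ℕ × X) : ℕ → ℕ :=
  fun i => if h : i < z.1.length then z.1[i] else
    Nat.pair (navSeq V (z.1.map gg) z.2 i) (Nat.pair z.1.length (code z.2 (i - z.1.length)))

variable {X : Type*} {V : List ℕ → Set X} {code : X → ℕ → ℕ}

lemma FF_mem_cyl (z : List ℕ × X) : FF V code z ∈ cyl z.1 := by
  rw [mem_cyl]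
  apply List.ext_getElem (by simp)
  intro i h1 h2
  have hi : i < z.1.length := by simpa using h2
  rw [restrictSeq_getElem _ hi]
  simp [FF, hi]

lemma FF_decode (hcode : Function.Injective code) {z z' : List ℕ × X}
    (h : FF V code z = FF V code z') : z.2 = z'.2 := by
  have hL : z.1.length = z'.1.length := by
    have h1 := congrFun h (max z.1.length z'.1.length)
    rw [FF, FF, dif_neg (by omega), dif_neg (by omega)] at h1
    have h2 := (Nat.pair_eq_pair.1 h1).2
    exact (Nat.pair_eq_pair.1 h2).1
  have hcd : code z.2 = code z'.2 := by
    funext j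
    have h1 := congrFun h (z.1.length + j)
    rw [FF, FF, dif_neg (by omega), dif_neg (by omega), ← hL] at h1
    have h2 := (Nat.pair_eq_pair.1 h1).2
    have h3 := (Nat.pair_eq_pair.1 h2).2
    simpa using h3
  exact hcode hcd

lemma gg_comp_FF (hU : ∀ a : List ℕ, V a = ⋃ n : ℕ, V (a ++ [n]))
    {z : List ℕ × X} (hx : z.2 ∈ V (z.1.map gg)) :
    gg ∘ FF V code z = navSeq V (z.1.map gg) z.2 := by
  funext i
  by_cases hi : i < z.1.length
  · have hspec := (navSeq_spec (V := V) hU hx).1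
    have hi' : i < (z.1.map gg).length := by simpa using hi
    have h2 := congrArg (fun l => l.getD i 0) hspec
    simp only [List.getD_eq_getElem _ 0 (by simp [hi] : i < (restrictSeq
      (navSeq V (z.1.map gg) z.2) (z.1.map gg).length).length),
      List.getD_eq_getElem _ 0 hi'] at h2
    rw [restrictSeq_getElem _ (by simpa using hi), List.getElem_map] at h2
    simp [Function.comp, FF, hi, h2]
  · simp [Function.comp, FF, hi]

lemma FF_fruit (hU : ∀ a : List ℕ, V a = ⋃ n : ℕ, V (a ++ [n]))
    {z : List ℕ × X} (hx : z.2 ∈ V (z.1.map gg)) :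
    z.2 ∈ fruit (schemeComp V gg) (FF V code z) := by
  rw [fruit_comp, gg_comp_FF hU hx]
  rw [fruit, mem_iInter]
  exact (navSeq_spec hU hx).2

open Classical in
/-- the selector map. -/
noncomputable def ffSel (V : List ℕ → Set X) (code : X → ℕ → ℕ) [Nonempty X]
    (p : ℕ → ℕ) : X :=
  if h : ∃ z : List ℕ × X, z.2 ∈ V (z.1.map gg) ∧ FF V code z = p then h.choose.2
  else if h2 : (fruit (schemeComp V gg) p).Nonempty then h2.choose
  else Classical.arbitrary X

variable [Nonempty X]

lemma ffSel_FF (hcode : Function.Injective code) {z : List ℕ × X}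
    (hx : z.2 ∈ V (z.1.map gg)) : ffSel V code (FF V code z) = z.2 := by
  have hex : ∃ z' : List ℕ × X, z'.2 ∈ V (z'.1.map gg) ∧ FF V code z' = FF V code z :=
    ⟨z, hx, rfl⟩
  rw [ffSel, dif_pos hex]
  exact FF_decode hcode hex.choose_spec.2

lemma ffSel_fruit (hU : ∀ a : List ℕ, V a = ⋃ n : ℕ, V (a ++ [n]))
    (hWc : ∀ p, (fruit (schemeComp V gg) p).Nonempty) (p : ℕ → ℕ) :
    ffSel V code p ∈ fruit (schemeComp V gg) p := by
  rw [ffSel]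
  split
  · rename_i h
    obtain ⟨hmem, hFp⟩ := h.choose_spec
    have hfr := FF_fruit (code := code) hU hmem
    rwa [hFp] at hfr
  · rw [dif_pos (hWc p)]
    exact (hWc p).choose_spec

end Coding

section Sigma

variable {X : Type*} [TopologicalSpace X] {f : (ℕ → ℕ) → X}

lemma sigma_isOpen_preimage {U : Set X} (hU : IsOpen U) :
    @IsOpen _ (sigmaTop f) (f ⁻¹' U) :=
  TopologicalSpace.isOpen_generateFrom_of_mem (Or.inl ⟨U, hU, rfl⟩)

lemma sigma_isOpen_cyl (a : List ℕ) : @IsOpen _ (sigmaTop f) (cyl a) :=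
  TopologicalSpace.isOpen_generateFrom_of_mem (Or.inr ⟨a, rfl⟩)

lemma sigma_basis {U : Set (ℕ → ℕ)} (hU : @IsOpen _ (sigmaTop f) U) :
    ∀ p ∈ U, ∃ (U' : Set X) (a : List ℕ), IsOpen U' ∧ f p ∈ U' ∧ p ∈ cyl a ∧
      f ⁻¹' U' ∩ cyl a ⊆ U := by
  have hU' : TopologicalSpace.GenerateOpen
      ({S : Set (ℕ → ℕ) | ∃ U : Set X, IsOpen U ∧ S = f ⁻¹' U} ∪
        {S : Set (ℕ → ℕ) | ∃ a : List ℕ, S = cyl a}) U := hU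
  clear hU
  induction hU' with
  | basic s hs =>
    rcases hs with ⟨U', hU'o, rfl⟩ | ⟨a, rfl⟩
    · intro p hp
      refine ⟨U', [], hU'o, hp, by rw [cyl_nil]; trivial, ?_⟩
      rintro q ⟨hq, -⟩; exact hq
    · intro p hp
      refine ⟨univ, a, isOpen_univ, trivial, hp, ?_⟩
      rintro q ⟨-, hq⟩; exact hq
  | univ =>
    intro p _
    exact ⟨univ, [], isOpen_univ, trivial, by rw [cyl_nil]; trivial, fun q _ => trivial⟩
  | inter s t _ _ ihs iht =>
    rintro p ⟨hps, hpt⟩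
    obtain ⟨U1, a1, h1o, h1f, h1c, h1s⟩ := ihs p hps
    obtain ⟨U2, a2, h2o, h2f, h2c, h2s⟩ := iht p hpt
    have key : ∀ {b c : List ℕ}, p ∈ cyl b → p ∈ cyl c → b.length ≤ c.length →
        cyl c ⊆ cyl b := by
      intro b c hb hc hlen
      apply cyl_mono
      rw [List.prefix_iff_eq_take, ← mem_cyl.1 hb, ← mem_cyl.1 hc, restrictSeq_length,
        restrictSeq_take p hlen]
    by_cases hl : a1.length ≤ a2.length
    · refine ⟨U1 ∩ U2, a2, h1o.inter h2o, ⟨h1f, h2f⟩, h2c, ?_⟩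
      rintro q ⟨hq, hqc⟩
      exact ⟨h1s ⟨hq.1, key h1c h2c hl hqc⟩, h2s ⟨hq.2, hqc⟩⟩
    · refine ⟨U1 ∩ U2, a1, h1o.inter h2o, ⟨h1f, h2f⟩, h1c, ?_⟩
      rintro q ⟨hq, hqc⟩
      exact ⟨h1s ⟨hq.1, hqc⟩, h2s ⟨hq.2, key h2c h1c (by omega) hqc⟩⟩
  | sUnion S' hS' ih =>
    rintro p ⟨s, hs, hps⟩
    obtain ⟨U', a, ho, hf, hc, hsub⟩ := ih s hs p hps
    exact ⟨U', a, ho, hf, hc, hsub.trans (subset_sUnion_of_mem hs)⟩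

end Sigma


/-- X is a continuous open image of a π-space iff |X| ≤ 2^ℵ₀ and there is
a complete π-base Souslin scheme on X that covers X. -/
theorem statement11 {X : Type} [TopologicalSpace X] :
    IsContinuousOpenImageOfPiSpace X ↔
    (Cardinal.mk X ≤ Cardinal.continuum ∧
      ∃ V : List ℕ → Set X, IsPiBaseScheme V ∧ Complete V ∧ Covers V Set.univ) := by
  constructor
  · rintro ⟨Y, tY, f, ⟨V, hVo, hVp, hVs, hVb⟩, hcont, hopen, hsurj⟩
    obtain ⟨⟨hVnil, hU⟩, hdisj⟩ := hVp
    choose xOf hxOfs using hVs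
    have hxmem : ∀ p, xOf p ∈ fruit V p := fun p => by
      rw [hxOfs]; exact mem_singleton _
    have Vne : ∀ a, (V a).Nonempty := by
      intro a
      obtain ⟨p, hp⟩ := cyl_nonempty a
      refine ⟨xOf p, ?_⟩
      have h2 := fruit_subset V p a.length (hxmem p)
      rwa [mem_cyl.1 hp] at h2
    have hsurj2 : Function.Surjective (fun p : ℕ → ℕ => f (xOf p)) := by
      intro x
      obtain ⟨y, rfl⟩ := hsurj x
      have hy : y ∈ V [] := by rw [hVnil]; trivial
      obtain ⟨q, -, hq⟩ := scheme_nav hU (d := []) hy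
      have h2 : y ∈ fruit V q := mem_iInter.2 hq
      rw [hxOfs q, mem_singleton_iff] at h2
      exact ⟨q, (congrArg f h2).symm⟩
    refine ⟨?_, fun a => f '' V a, ⟨fun a => hopen _ (hVo a), ?_⟩, ?_, ?_, ?_⟩
    · calc Cardinal.mk X ≤ Cardinal.mk (ℕ → ℕ) := Cardinal.mk_le_of_surjective hsurj2
        _ = Cardinal.continuum := mk_baire
    · intro a
      constructor
      · intro b _
        exact (Vne b).image f
      · rintro U hUo ⟨x, hxU, y, hyV, rfl⟩
        obtain ⟨G, ⟨c, rfl⟩, hGs⟩ :=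
          hVb.2 (f ⁻¹' U ∩ V a) ((hUo.preimage hcont).inter (hVo a)) ⟨y, hxU, hyV⟩
        obtain ⟨z, hz⟩ := Vne c
        rcases scheme_comparable hU hdisj (a := c) (b := a) ⟨z, hz, (hGs hz).2⟩ with hca | hac
        · refine ⟨a, List.prefix_refl a, ?_⟩
          rintro x ⟨y', hy', rfl⟩
          exact ⟨(hGs (scheme_mono hU hca hy')).1, ⟨y', hy', rfl⟩⟩
        · refine ⟨c, hac, ?_⟩
          rintro x ⟨y', hy', rfl⟩
          exact ⟨(hGs hy').1, ⟨y', (hGs hy').2, rfl⟩⟩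
    · intro p
      exact ⟨f (xOf p), mem_iInter.2 fun n => ⟨xOf p, fruit_subset V p n (hxmem p), rfl⟩⟩
    · show f '' V [] = univ
      rw [hVnil, image_univ, hsurj.range_eq]
    · intro a
      show f '' V a = ⋃ n, f '' V (a ++ [n])
      rw [hU a, image_iUnion]
  · rintro ⟨hcard, V, ⟨hVo, hVn⟩, hVc, hVnil, hU⟩
    haveI hXne : Nonempty X := by
      obtain ⟨x, -⟩ := (hVn []).1 [] List.nil_prefix
      exact ⟨x⟩
    obtain ⟨code, hcode⟩ : ∃ c : X → ℕ → ℕ, Function.Injective c := by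
      have h1 : Cardinal.mk X ≤ Cardinal.mk (ℕ → ℕ) := by rw [mk_baire]; exact hcard
      obtain ⟨e⟩ := (Cardinal.le_def X (ℕ → ℕ)).1 h1
      exact ⟨e, e.injective⟩
    set W : List ℕ → Set X := schemeComp V gg with hW
    have hUW : ∀ a : List ℕ, W a = ⋃ n : ℕ, W (a ++ [n]) := by
      intro a
      ext x
      simp only [hW, schemeComp, mem_iUnion, List.map_append, List.map_cons, List.map_nil]
      constructor
      · intro hx
        rw [hU (a.map gg)] at hx
        obtain ⟨m, hm⟩ := mem_iUnion.1 hx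
        exact ⟨Nat.pair m 0, by simpa using hm⟩
      · rintro ⟨n, hn⟩
        exact scheme_child_subset hU (a.map gg) (gg n) (by simpa using hn)
    have hWnil : W [] = univ := by simpa [hW, schemeComp] using hVnil
    have hWne : ∀ b : List ℕ, (W b).Nonempty :=
      fun b => (hVn (b.map gg)).1 _ (List.prefix_refl _)
    have hWnet : IsPiNetScheme W := by
      intro a
      refine ⟨fun b _ => hWne b, ?_⟩
      intro U hUo hne
      obtain ⟨c, hpre, hsub⟩ := (hVn (a.map gg)).2 U hUo
        (by simpa [hW, schemeComp] using hne)
      obtain ⟨t, rfl⟩ := hpre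
      refine ⟨a ++ t.map (fun m => Nat.pair m 0), List.prefix_append _ _, ?_⟩
      have hmap : (a ++ t.map (fun m => Nat.pair m 0)).map gg = a.map gg ++ t := by
        simp [List.map_map, Function.comp_def]
      simp only [hW, schemeComp, hmap]
      exact hsub
    have hWc : Complete W := fun p => by rw [hW, fruit_comp]; exact hVc (gg ∘ p)
    have hWo : OpenScheme W := fun a => hVo _
    set f : (ℕ → ℕ) → X := ffSel V code with hf
    have hffr : ∀ p, f p ∈ fruit W p := fun p => ffSel_fruit hU hWc p
    have hfW : ∀ (p) (a : List ℕ), p ∈ cyl a → f p ∈ W a := by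
      intro p a hp
      have h2 := fruit_subset W p a.length (hffr p)
      rwa [mem_cyl.1 hp] at h2
    have hfFF : ∀ (a : List ℕ) (x : X), x ∈ W a → f (FF V code (a, x)) = x := by
      intro a x hx
      exact ffSel_FF hcode (z := (a, x)) hx
    refine ⟨ℕ → ℕ, sigmaTop f, f, ?_, ?_, ?_, ?_⟩
    · refine ⟨cyl, fun a => sigma_isOpen_cyl a,
        ⟨⟨cyl_nil, cyl_union⟩, fun a n m h => cyl_disjoint a h⟩,
        fun p => ⟨p, fruit_cyl p⟩, ?_, ?_⟩
      · rintro G ⟨a, rfl⟩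
        exact ⟨sigma_isOpen_cyl a, cyl_nonempty a⟩
      · rintro U hUo ⟨p, hp⟩
        obtain ⟨U', a, hU'o, hfp, hpc, hsub⟩ := sigma_basis hUo p hp
        obtain ⟨b, hab, hbs⟩ := (hWnet a).2 U' hU'o ⟨f p, hfp, hfW p a hpc⟩
        refine ⟨cyl b, ⟨b, rfl⟩, ?_⟩
        intro q hq
        exact hsub ⟨(hbs (hfW q b hq)).1, cyl_mono hab hq⟩
    · exact continuous_def.mpr fun U hUo => sigma_isOpen_preimage hUo
    · intro U hUo
      rw [isOpen_iff_forall_mem_open]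
      rintro x ⟨p, hpU, rfl⟩
      obtain ⟨U', a, hU'o, hfp, hpc, hsub⟩ := sigma_basis hUo p hpU
      refine ⟨U' ∩ W a, ?_, hU'o.inter (hWo a), ⟨hfp, hfW p a hpc⟩⟩
      rintro y ⟨hyU', hyW⟩
      refine ⟨FF V code (a, y), hsub ⟨?_, FF_mem_cyl (a, y)⟩, hfFF a y hyW⟩
      simp only [mem_preimage, hfFF a y hyW]
      exact hyU'
    · intro x
      have hx : x ∈ W [] := by rw [hWnil]; trivial
      exact ⟨FF V code ([], x), hfFF [] x hx⟩
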